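/- arXiv:2108.11279 — 2 statements merged into one kernel-verified Lean document; each statement's English description precedes it below -/
import Mathlib

section
/- Let G = (A, φ, w) be a D0L-system with non-erasing morphism φ and H = (A, φ, w, Ψ) an HD0L-system over it. If L_G is uniformly recurrent, then L_H contains at most one infinite repetition up to conjugation: if u and v are primitive words with u^k ∈ L_H and v^k ∈ L_H for all k ∈ ℕ, then v is a conjugate of u (i.e., u = xy and v = yx for some words x, y). -/
/-- The extension of the morphism given by `φ` on letters to a morphism on words. -/
def extM {A B : Type*} (φ : A → List B) (w : List A) : List B := w.flatMap φ

/-- The `k`-th power `u^k` of a word `u`. -/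
def wpow {A : Type*} (u : List A) (k : ℕ) : List A := (List.replicate k u).flatten

/-- A word `v` is primitive if `v = u^k` implies `k = 1`. -/
def Primitive {A : Type*} (v : List A) : Prop :=
  v ≠ [] ∧ ∀ (u : List A) (k : ℕ), v = wpow u k → k = 1

/-- The language of the D0L-system `(A, φ, w)`: all factors of the words `φ^n(w)`. -/
def LangD0L {A : Type*} (φ : A → List A) (w : List A) : Set (List A) :=
  {v | ∃ n : ℕ, v <:+: (extM φ)^[n] w}

/-- `fact(Ψ(L))`: all factors of `Ψ`-images of elements of `L`. -/
def factImg {A B : Type*} (Ψ : A → List B) (L : Set (List A)) : Set (List B) :=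
  {v | ∃ u ∈ L, v <:+: extM Ψ u}

/-- The language of the HD0L-system `(A, φ, w, Ψ)`. -/
def LangHD0L {A B : Type*} (φ : A → List A) (w : List A) (Ψ : A → List B) : Set (List B) :=
  factImg Ψ (LangD0L φ w)

/-- A morphism is non-erasing if no letter is mapped to the empty word. -/
def NonErasing {A B : Type*} (φ : A → List B) : Prop := ∀ a, φ a ≠ []

/-- A letter `b` is bounded (w.r.t. `φ`) if the lengths `|φ^n(b)|` are bounded. -/
def BddLetter {A : Type*} (φ : A → List A) (b : A) : Prop :=
  ∃ C : ℕ, ∀ n : ℕ, ((extM φ)^[n] [b]).length ≤ C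

/-- The set of letters occurring in a word. -/
def alph {A : Type*} (u : List A) : Set A := {a | a ∈ u}

/-- `alph(φ(S))` for a set of letters `S`: letters occurring in `φ(b)` for some `b ∈ S`. -/
def alphIm {A : Type*} (φ : A → List A) (S : Set A) : Set A := ⋃ b ∈ S, alph (φ b)

/-- A D0L-system is pushy if its language contains infinitely many words over bounded letters. -/
def Pushy {A : Type*} (φ : A → List A) (w : List A) : Prop :=
  {v ∈ LangD0L φ w | ∀ a ∈ v, BddLetter φ a}.Infinite

/-- A factorial language `L` is uniformly recurrent: for every `n` there is `K` such that
every element of `L` of length `K` contains every element of `L` of length `n` as a factor. -/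
def UnifRec {A : Type*} (L : Set (List A)) : Prop :=
  ∀ n : ℕ, ∃ K : ℕ, ∀ u ∈ L, u.length = K → ∀ v ∈ L, v.length = n → v <:+: u

/-- Vertices of the tree of invariant subalphabets of `φ`: nonempty sets `S` with
`alph(φ(S)) = S` containing an unbounded letter `a` with `alph(φ(a)) = S`. -/
def IsVertex {A : Type*} (φ : A → List A) (S : Set A) : Prop :=
  S.Nonempty ∧ alphIm φ S = S ∧ ∃ a ∈ S, ¬ BddLetter φ a ∧ alph (φ a) = S

/-- Leaves of the tree of invariant subalphabets: minimal vertices w.r.t. inclusion. -/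
def IsLeaf {A : Type*} (φ : A → List A) (S : Set A) : Prop :=
  IsVertex φ S ∧ ∀ T, IsVertex φ T → T ⊆ S → T = S

/-- Two words are conjugate: `u = xy` and `v = yx`. -/
def Conj {A : Type*} (u v : List A) : Prop := ∃ x y : List A, u = x ++ y ∧ v = y ++ x

/-- The prefix of length `n` of an infinite word. -/
def prefW {A : Type*} (w : ℕ → A) (n : ℕ) : List A := (List.range n).map w

/-!
By uniform recurrence of `L_G`, every word of `L_H` occurs in every sufficiently long word of
`L_H`; in particular `v^|u|` occurs in some `u^N`. Read from its starting position, this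
occurrence gives `v^|u| = u'^|v|` for a rotation `u'` of `u`. Then `u'` and `v` generate the same
infinite periodic word, which therefore has period `gcd(|u|, |v|)`, and primitivity of both words
forces `u' = v`.
-/

section Words

variable {B : Type*}

lemma wpow_succ (z : List B) (k : ℕ) : wpow z (k + 1) = z ++ wpow z k := by
  simp [wpow, List.replicate_succ]

lemma wpow_add (z : List B) (a b : ℕ) : wpow z (a + b) = wpow z a ++ wpow z b := by
  simp only [wpow, List.replicate_add, List.flatten_append]

lemma wpow_length (z : List B) (k : ℕ) : (wpow z k).length = k * z.length := by
  simp [wpow, List.length_flatten]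

lemma wpow_prefix_wpow (z : List B) {a b : ℕ} (hab : a ≤ b) : wpow z a <+: wpow z b := by
  obtain ⟨c, rfl⟩ := Nat.exists_eq_add_of_le hab
  rw [wpow_add]
  exact List.prefix_append _ _

lemma getElem?_wpow (z : List B) {k i : ℕ} (hi : i < k * z.length) :
    (wpow z k)[i]? = z[i % z.length]? := by
  induction k generalizing i with
  | zero => simp at hi
  | succ k ih =>
    rw [wpow_succ]
    rcases Nat.lt_or_ge i z.length with h | h
    · rw [List.getElem?_append_left h, Nat.mod_eq_of_lt h]
    · rw [List.getElem?_append_right h, ih (by rw [Nat.succ_mul] at hi; omega),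
        ← Nat.mod_eq_sub_mod h]

lemma eq_wpow_of_getElem? {l z : List B} {e : ℕ} (hlen : l.length = e * z.length)
    (h : ∀ i < l.length, l[i]? = z[i % z.length]?) : l = wpow z e := by
  apply List.ext_getElem?
  intro i
  rcases Nat.lt_or_ge i l.length with hi | hi
  · rw [h i hi, getElem?_wpow z (hlen ▸ hi)]
  · rw [List.getElem?_eq_none hi, List.getElem?_eq_none (by rw [wpow_length]; omega)]

lemma rotate_wpow (z : List B) (e n : ℕ) : (wpow z e).rotate n = wpow (z.rotate n) e := by
  refine eq_wpow_of_getElem? (by simp [wpow_length]) fun i hi => ?_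
  rw [List.length_rotate, wpow_length] at hi
  have hz : 0 < z.length := Nat.pos_of_mul_pos_left (Nat.zero_lt_of_lt hi)
  rw [List.getElem?_rotate (by rwa [wpow_length]), wpow_length,
    getElem?_wpow z (Nat.mod_lt _ (Nat.zero_lt_of_lt hi)), Nat.mod_mod_of_dvd _ (dvd_mul_left _ _),
    List.length_rotate, List.getElem?_rotate (Nat.mod_lt _ hz), Nat.mod_add_mod]

lemma exists_prefix_wpow_rotate_of_infix {s z : List B} {k : ℕ} (h : s <:+: wpow z k) :
    ∃ n, s <+: wpow (z.rotate n) k := by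
  obtain ⟨L, R, hLR⟩ := h
  refine ⟨L.length, ?_⟩
  rw [← rotate_wpow, ← hLR, List.append_assoc, List.rotate_append_length_eq, List.append_assoc]
  exact List.prefix_append _ _

lemma Primitive.rotate {u : List B} (hu : Primitive u) (n : ℕ) : Primitive (u.rotate n) := by
  refine ⟨by simpa [List.rotate_eq_nil_iff] using hu.1, fun z k hz => ?_⟩
  obtain ⟨m, hm⟩ := (List.IsRotated.symm ⟨n, rfl⟩ : u.rotate n ~r u)
  rw [hz, rotate_wpow] at hm
  exact hu.2 _ _ hm.symm

lemma conj_rotate (u : List B) (n : ℕ) : Conj u (u.rotate n) :=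
  ⟨_, _, (List.take_append_drop (n % u.length) u).symm, List.rotate_eq_drop_append_take_mod⟩

/-- The infinite word `z^ω`, with `Option` values so that `[]^ω` needs no default letter. -/
def omegaPow (z : List B) (i : ℕ) : Option B := z[i % z.length]?

lemma omegaPow_periodic (z : List B) : Function.Periodic (omegaPow z) z.length := by
  intro i
  simp [omegaPow]

lemma omegaPow_wpow (z : List B) {k : ℕ} (hk : 0 < k) : omegaPow (wpow z k) = omegaPow z := by
  funext i
  rcases eq_or_ne z [] with rfl | hz
  · simp [omegaPow, wpow]
  have hpos : 0 < k * z.length := Nat.mul_pos hk (List.length_pos_iff.mpr hz)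
  rw [omegaPow, wpow_length, getElem?_wpow z (Nat.mod_lt _ hpos),
    Nat.mod_mod_of_dvd _ (dvd_mul_left _ _), omegaPow]

lemma Function.Periodic.nat_gcd {α : Type*} {f : ℕ → α} {m n : ℕ} (hm : Function.Periodic f m)
    (hn : Function.Periodic f n) : Function.Periodic f (Nat.gcd m n) := by
  induction m, n using Nat.gcd.induction with
  | H0 n => simpa using hn
  | H1 m n _ ih =>
    rw [Nat.gcd_rec]
    refine ih (fun i => ?_) hm
    have hmul : f (i + n % m + n / m * m) = f (i + n % m) := by simpa using hm.nat_mul (n / m) _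
    rw [← hmul, add_assoc, Nat.mod_add_div' n m, hn]

lemma Primitive.eq_length_of_periodic {z : List B} (hz : Primitive z) {d : ℕ} (hd : 0 < d)
    (hdz : d ∣ z.length) (hper : Function.Periodic (omegaPow z) d) : d = z.length := by
  have hle : d ≤ z.length := Nat.le_of_dvd (List.length_pos_iff.mpr hz.1) hdz
  have hpow : z = wpow (z.take d) (z.length / d) := by
    refine eq_wpow_of_getElem? (by simp [hle, Nat.div_mul_cancel hdz]) fun i hi => ?_
    have hmod : i % d < d := Nat.mod_lt i hd
    calc z[i]? = omegaPow z i := by rw [omegaPow, Nat.mod_eq_of_lt hi]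
      _ = omegaPow z (i % d) := (hper.map_mod_nat i).symm
      _ = (z.take d)[i % (z.take d).length]? := by
        rw [omegaPow, Nat.mod_eq_of_lt (by omega), List.length_take_of_le hle,
          List.getElem?_take_of_lt hmod]
  have h1 := hz.2 _ _ hpow
  rw [Nat.div_eq_iff_eq_mul_left hd hdz, one_mul] at h1
  exact h1.symm

lemma Primitive.eq_of_omegaPow_eq {x y : List B} (hx : Primitive x) (hy : Primitive y)
    (hxy : omegaPow x = omegaPow y) : x = y := by
  have hper : Function.Periodic (omegaPow x) (Nat.gcd x.length y.length) :=
    (omegaPow_periodic x).nat_gcd (hxy ▸ omegaPow_periodic y)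
  have hg : 0 < Nat.gcd x.length y.length :=
    Nat.gcd_pos_of_pos_left _ (List.length_pos_iff.mpr hx.1)
  have hgx := hx.eq_length_of_periodic hg (Nat.gcd_dvd_left _ _) hper
  have hgy := hy.eq_length_of_periodic hg (Nat.gcd_dvd_right _ _) (hxy ▸ hper)
  apply List.ext_getElem?
  intro i
  rcases Nat.lt_or_ge i x.length with hi | hi
  · have := congrFun hxy i
    rwa [omegaPow, omegaPow, Nat.mod_eq_of_lt hi, Nat.mod_eq_of_lt (by omega)] at this
  · rw [List.getElem?_eq_none hi, List.getElem?_eq_none (by omega)]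

lemma Primitive.eq_of_wpow_eq {x y : List B} (hx : Primitive x) (hy : Primitive y) {a b : ℕ}
    (ha : 0 < a) (hb : 0 < b) (h : wpow x a = wpow y b) : x = y :=
  hx.eq_of_omegaPow_eq hy (by rw [← omegaPow_wpow x ha, h, omegaPow_wpow y hb])

end Words

section Morphism

variable {A B : Type*} (Ψ : A → List B)

lemma extM_append (x y : List A) : extM Ψ (x ++ y) = extM Ψ x ++ extM Ψ y := by
  simp [extM]

lemma extM_cons (a : A) (x : List A) : extM Ψ (a :: x) = Ψ a ++ extM Ψ x := rfl

lemma extM_infix {x y : List A} (h : x <:+: y) : extM Ψ x <:+: extM Ψ y := by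
  obtain ⟨s, t, rfl⟩ := h
  exact ⟨extM Ψ s, extM Ψ t, by simp [extM_append]⟩

variable {Ψ} {C : ℕ}

lemma extM_length_le (hC : ∀ a, (Ψ a).length ≤ C) (x : List A) :
    (extM Ψ x).length ≤ C * x.length := by
  induction x with
  | nil => simp [extM]
  | cons a x ih =>
    rw [extM_cons, List.length_append, List.length_cons, Nat.mul_succ]
    have := hC a
    omega

lemma exists_prefix_extM_of_prefix (hC : ∀ a, (Ψ a).length ≤ C) {y : List A} {s : List B}
    (h : s <+: extM Ψ y) :
    ∃ y', y' <+: y ∧ extM Ψ y' <+: s ∧ s.length ≤ (extM Ψ y').length + C := by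
  induction y generalizing s with
  | nil => exact ⟨[], List.nil_prefix, List.nil_prefix, by simp [extM, List.prefix_nil.mp h]⟩
  | cons a y ih =>
    rw [extM_cons] at h
    rcases le_or_gt s.length (Ψ a).length with hs | hs
    · exact ⟨[], List.nil_prefix, List.nil_prefix, by simpa [extM] using hs.trans (hC a)⟩
    obtain ⟨s', rfl⟩ := List.prefix_of_prefix_length_le (List.prefix_append _ _) h hs.le
    obtain ⟨y', hy', hs', hlen⟩ := ih ((List.prefix_append_right_inj _).mp h)
    refine ⟨a :: y', List.cons_prefix_cons.mpr ⟨rfl, hy'⟩, ?_, ?_⟩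
    · rwa [extM_cons, List.prefix_append_right_inj]
    · simp only [extM_cons, List.length_append] at hlen ⊢
      omega

lemma exists_infix_extM_of_infix (hC : ∀ a, (Ψ a).length ≤ C) {y : List A} {s : List B}
    (h : s <:+: extM Ψ y) :
    ∃ y', y' <:+: y ∧ extM Ψ y' <:+: s ∧ s.length ≤ (extM Ψ y').length + 2 * C := by
  induction y generalizing s with
  | nil => exact ⟨[], List.nil_infix, List.nil_infix, by simp [extM, List.infix_nil.mp h]⟩
  | cons a y ih =>
    rw [extM_cons] at h
    rcases List.infix_append_iff.mp h with hs | hs | ⟨s₁, s₂, rfl, hs₁, hs₂⟩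
    · exact ⟨[], List.nil_infix, List.nil_infix,
        by have := hs.length_le.trans (hC a); simp [extM]; omega⟩
    · obtain ⟨y', hy', hs', hlen⟩ := ih hs
      exact ⟨y', hy'.trans (List.suffix_cons a y).isInfix, hs', hlen⟩
    · obtain ⟨y', hy', hs', hlen⟩ := exists_prefix_extM_of_prefix hC hs₂
      refine ⟨y', hy'.isInfix.trans (List.suffix_cons a y).isInfix,
        hs'.isInfix.trans List.infix_append_right, ?_⟩
      have := hs₁.length_le.trans (hC a)
      rw [List.length_append]
      omega

end Morphism

lemma langD0L_of_infix {A : Type*} {φ : A → List A} {w x y : List A} (hx : x ∈ LangD0L φ w)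
    (hyx : y <:+: x) : y ∈ LangD0L φ w := by
  obtain ⟨n, hn⟩ := hx
  exact ⟨n, hyx.trans hn⟩

lemma UnifRec.exists_infix_of_mem_factImg {A B : Type*} [Finite A] {L : Set (List A)}
    (hL : ∀ x ∈ L, ∀ y, y <:+: x → y ∈ L) (hUR : UnifRec L) (Ψ : A → List B) {s : List B}
    (hs : s ∈ factImg Ψ L) : ∃ N, ∀ t ∈ factImg Ψ L, N ≤ t.length → s <:+: t := by
  obtain ⟨C, hC⟩ := (Set.finite_range fun a => (Ψ a).length).bddAbove
  replace hC : ∀ a, (Ψ a).length ≤ C := fun a => hC ⟨a, rfl⟩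
  obtain ⟨x, hxL, hsx⟩ := hs
  obtain ⟨K, hK⟩ := hUR x.length
  refine ⟨C * K + 2 * C + 1, fun t ⟨y, hyL, hty⟩ htlen => ?_⟩
  obtain ⟨y', hy'y, hy't, hlen⟩ := exists_infix_extM_of_infix hC hty
  have hKy' : K < y'.length :=
    Nat.lt_of_mul_lt_mul_left (a := C) (by have := extM_length_le hC y'; omega)
  have hxy' : x <:+: y'.take K :=
    hK _ (hL _ (hL y hyL y' hy'y) _ (List.take_prefix K y').isInfix)
      (List.length_take_of_le hKy'.le) x hxL rfl
  exact hsx.trans ((extM_infix Ψ hxy').trans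
    ((extM_infix Ψ (List.take_prefix K y').isInfix).trans hy't))

theorem stmt2_general {A B : Type*} [Fintype A]
    (φ : A → List A) (w : List A) (Ψ : A → List B)
    (hUR : UnifRec (LangD0L φ w))
    (u v : List B) (hu : Primitive u) (hv : Primitive v)
    (huk : ∀ k : ℕ, wpow u k ∈ LangHD0L φ w Ψ)
    (hvk : ∀ k : ℕ, wpow v k ∈ LangHD0L φ w Ψ) :
    Conj u v := by
  have hu0 : 0 < u.length := List.length_pos_iff.mpr hu.1
  have hv0 : 0 < v.length := List.length_pos_iff.mpr hv.1
  obtain ⟨N, hN⟩ := hUR.exists_infix_of_mem_factImg (fun _ hx _ => langD0L_of_infix hx) Ψ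
    (hvk u.length)
  have hocc : wpow v u.length <:+: wpow u N :=
    hN _ (huk N) (by rw [wpow_length]; exact Nat.le_mul_of_pos_right N hu0)
  obtain ⟨n, hpre⟩ := exists_prefix_wpow_rotate_of_infix hocc
  have hlen : (wpow v u.length).length = (wpow (u.rotate n) v.length).length := by
    simp only [wpow_length, List.length_rotate, Nat.mul_comm]
  have hvN : v.length ≤ N := by
    have := hpre.length_le
    rw [wpow_length, wpow_length, List.length_rotate, Nat.mul_comm] at this
    exact Nat.le_of_mul_le_mul_right this hu0
  have heq : wpow v u.length = wpow (u.rotate n) v.length :=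
    (List.prefix_of_prefix_length_le hpre (wpow_prefix_wpow _ hvN) hlen.le).eq_of_length hlen
  exact (hu.rotate n).eq_of_wpow_eq hv hv0 hu0 heq.symm ▸ conj_rotate u n

/-- If `L_G` is uniformly recurrent, then `L_H` contains at most one infinite
repetition up to conjugation. -/
theorem stmt2 {A B : Type*} [Fintype A] [Fintype B]
    (φ : A → List A) (w : List A) (Ψ : A → List B) (hφ : NonErasing φ)
    (hUR : UnifRec (LangD0L φ w))
    (u v : List B) (hu : Primitive u) (hv : Primitive v)
    (huk : ∀ k : ℕ, wpow u k ∈ LangHD0L φ w Ψ)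
    (hvk : ∀ k : ℕ, wpow v k ∈ LangHD0L φ w Ψ) :
    Conj u v :=
  stmt2_general φ w Ψ hUR u v hu hv huk hvk
end

section
/- Let G = (A, φ, w) be a D0L-system with non-erasing morphism φ, and let p > 0 and q ≥ 0 be integers with p > q such that alph(φ^i(a)) = alph(φ^{i+p}(a)) for every letter a of w and every i ≥ q; for 0 ≤ i < q + p let G_i = (A_i, φ^p, φ^i(w)) with A_i = ∪_{a ∈ alph(w)} alph(φ^i(a)). If 𝐰 is an infinite word all of whose prefixes lie in L_G, then there exists i with q ≤ i < q + p such that every prefix of 𝐰 lies in L_{G_i}. -/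
def Factorial {A : Type*} (L : Set (List A)) : Prop := ∀ u ∈ L, ∀ v, v <:+: u → v ∈ L

lemma factorial_LangD0L {A : Type*} (φ : A → List A) (w : List A) : Factorial (LangD0L φ w) :=
  fun _ ⟨n, hu⟩ _ hv => ⟨n, hv.trans hu⟩

lemma prefW_prefix {A : Type*} (w : ℕ → A) {m n : ℕ} (h : m ≤ n) :
    prefW w m <+: prefW w n := by
  have hm : prefW w m = (prefW w n).take m := by
    simp only [prefW, ← List.map_take, List.take_range, Nat.min_eq_left h]
  exact hm ▸ List.take_prefix _ _

lemma exists_forall_prefW_mem {A ι : Type*} [Finite ι] {L : ι → Set (List A)}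
    (hL : ∀ i, Factorial (L i)) (w : ℕ → A) (h : ∀ n, ∃ i, prefW w n ∈ L i) :
    ∃ i, ∀ n, prefW w n ∈ L i := by
  choose f hf using h
  obtain ⟨i, hi⟩ := Finite.exists_infinite_fiber f
  rw [Set.infinite_coe_iff] at hi
  refine ⟨i, fun n => ?_⟩
  obtain ⟨b, hb, hnb⟩ := hi.exists_gt n
  have hfb : f b = i := hb
  exact hL i _ (hfb ▸ hf b) _ (prefW_prefix w hnb.le).isInfix

lemma iterate_extM_append {A : Type*} (φ : A → List A) (n : ℕ) (u v : List A) :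
    (extM φ)^[n] (u ++ v) = (extM φ)^[n] u ++ (extM φ)^[n] v := by
  induction n generalizing u v with
  | zero => rfl
  | succ n ih => simp only [Function.iterate_succ_apply', ih, extM, List.flatMap_append]

lemma iterate_extM_nil {A : Type*} (φ : A → List A) (n : ℕ) : (extM φ)^[n] [] = [] :=
  Function.iterate_fixed rfl n

lemma extM_iterate_singleton {A : Type*} (φ : A → List A) (p : ℕ) :
    extM (fun a => (extM φ)^[p] [a]) = (extM φ)^[p] := by
  funext u
  induction u with
  | nil => exact (iterate_extM_nil φ p).symm
  | cons a u ih =>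
    rw [← List.singleton_append, iterate_extM_append, ← ih]
    simp [extM]

lemma iterate_extM_iterate_singleton {A : Type*} (φ : A → List A) (p k : ℕ) :
    (extM (fun a => (extM φ)^[p] [a]))^[k] = (extM φ)^[p * k] := by
  rw [extM_iterate_singleton, Function.iterate_mul]

lemma mem_LangD0L_iterate_of_infix {A : Type*} {φ : A → List A} {w v : List A} {p i k : ℕ}
    (h : v <:+: (extM φ)^[i + p * k] w) :
    v ∈ LangD0L (fun a => (extM φ)^[p] [a]) ((extM φ)^[i] w) := by
  refine ⟨k, ?_⟩
  rwa [iterate_extM_iterate_singleton, ← Function.iterate_add_apply, Nat.add_comm]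

/-- Take `N` longer than each of `w, φ(w), …, φ^(q-1)(w)`. -/
lemma exists_length_bound_infix_iterate_ge {A : Type*} (φ : A → List A) (w : List A) (q : ℕ) :
    ∃ N, ∀ v ∈ LangD0L φ w, N ≤ v.length → ∃ m, q ≤ m ∧ v <:+: (extM φ)^[m] w := by
  refine ⟨(Finset.range q).sup (fun m => ((extM φ)^[m] w).length) + 1, fun v ⟨m, hm⟩ hv => ?_⟩
  refine ⟨m, ?_, hm⟩
  by_contra! hmq
  have := Finset.le_sup (f := fun m => ((extM φ)^[m] w).length) (Finset.mem_range.mpr hmq)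
  have := hm.length_le
  omega

theorem stmt5_general {A : Type*}
    (φ : A → List A) (w : List A)
    (p q : ℕ) (hp : 0 < p)
    (winf : ℕ → A) (hwinf : ∀ n : ℕ, prefW winf n ∈ LangD0L φ w) :
    ∃ i : ℕ, q ≤ i ∧ i < q + p ∧
      ∀ n : ℕ, prefW winf n ∈ LangD0L (fun a => (extM φ)^[p] [a]) ((extM φ)^[i] w) := by
  obtain ⟨N, hN⟩ := exists_length_bound_infix_iterate_ge φ w q
  have hmem : ∀ n, ∃ j : Fin p,
      prefW winf n ∈ LangD0L (fun a => (extM φ)^[p] [a]) ((extM φ)^[q + j] w) := by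
    intro n
    obtain ⟨m, hqm, hm⟩ := hN _ (hwinf (n + N)) (by simp [prefW])
    refine ⟨⟨(m - q) % p, Nat.mod_lt _ hp⟩, mem_LangD0L_iterate_of_infix (k := (m - q) / p) ?_⟩
    have hm_eq : q + (m - q) % p + p * ((m - q) / p) = m := by
      have := Nat.mod_add_div (m - q) p
      omega
    rw [hm_eq]
    exact (prefW_prefix winf (Nat.le_add_right n N)).isInfix.trans hm
  obtain ⟨j, hj⟩ := exists_forall_prefW_mem (fun _ => factorial_LangD0L _ _) winf hmem
  exact ⟨q + j, Nat.le_add_right q j, by omega, hj⟩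

/-- With `p > q` as above and `G_i = (A_i, φ^p, φ^i(w))`, every infinite
factor `winf` of `L_G` is an infinite factor of `L_{G_i}` for some `q ≤ i < q + p`. -/
theorem stmt5 {A : Type*} [Fintype A]
    (φ : A → List A) (w : List A) (hφ : NonErasing φ)
    (p q : ℕ) (hp : 0 < p) (hpq : q < p)
    (hper : ∀ a ∈ w, ∀ i : ℕ, q ≤ i →
      alph ((extM φ)^[i] [a]) = alph ((extM φ)^[i + p] [a]))
    (winf : ℕ → A) (hwinf : ∀ n : ℕ, prefW winf n ∈ LangD0L φ w) :
    ∃ i : ℕ, q ≤ i ∧ i < q + p ∧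
      ∀ n : ℕ, prefW winf n ∈ LangD0L (fun a => (extM φ)^[p] [a]) ((extM φ)^[i] w) :=
  stmt5_general φ w p q hp winf hwinf
end
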